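/- arXiv:1411.4656 — 2 statements merged into one kernel-verified Lean document; each statement's English description precedes it below -/
import Mathlib

section
/- For every n ≥ 2, ℓ ≥ 1, number of inputs m ≥ 1, and every function f : (Fin m)ⁿ → Fin ℓ, there exists a family of conditional probability distributions P(a|x) on outcomes a ∈ (Fin ℓ)ⁿ given inputs x ∈ (Fin m)ⁿ such that: (i) for each x, P(·|x) is a probability distribution; (ii) P satisfies the non-signaling condition, i.e., for every proper subset S of parties, the marginal distribution of outcomes of parties in S given inputs depends only on the inputs of parties in S; and (iii) for all x and all r ∈ Fin ℓ, the full-correlation function ∑_{a : ∑ᵢ aᵢ = r mod ℓ} P(a|x) equals δ[r = f(x)]. -/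
/-!
The witness is the uniform distribution on the fibre `{a | ∑ᵢ aᵢ = f x}`. It is non-signaling
because, for a party `j` outside a proper subset `S`, adding `d` to `aⱼ` keeps the outcomes on `S`
and moves the fibre over `r` onto the fibre over `r + d`; hence all fibres meet each
`{a | a = b on S}` in equally many points, and the marginal on `S` does not depend on `f x`.
-/

open Finset

section SumWitness

variable {ι G : Type*} [Fintype ι] [DecidableEq ι] [AddCommGroup G]

lemma exists_sum_eq [Nonempty ι] (c : G) : ∃ a : ι → G, ∑ i, a i = c :=
  ⟨Pi.single (Classical.arbitrary ι) c, by simp [sum_pi_single']⟩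

variable [Fintype G] [DecidableEq G]

lemma card_filter_agree_sum_eq (S : Finset ι) {j : ι} (hj : j ∉ S) (b : ι → G) (r r' : G) :
    #{a : ι → G | (∀ i ∈ S, a i = b i) ∧ ∑ i, a i = r} =
      #{a : ι → G | (∀ i ∈ S, a i = b i) ∧ ∑ i, a i = r'} := by
  refine card_equiv (Equiv.addRight (Pi.single j (r' - r))) fun a => ?_
  have hS : ∀ i ∈ S, (a + Pi.single j (r' - r) : ι → G) i = a i := fun i hi => by
    simp [ne_of_mem_of_not_mem hi hj]
  have hsum : ∑ i, (a + Pi.single j (r' - r) : ι → G) i = ∑ i, a i + (r' - r) := by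
    simp [sum_add_distrib, sum_pi_single']
  simp only [mem_filter, mem_univ, true_and, Equiv.coe_addRight]
  rw [hsum, ← eq_sub_iff_add_eq, sub_sub_cancel]
  exact and_congr_left' (forall₂_congr fun i hi => by rw [hS i hi])

lemma card_filter_sum_eq [Nonempty ι] (r r' : G) :
    #{a : ι → G | ∑ i, a i = r} = #{a : ι → G | ∑ i, a i = r'} := by
  simpa using card_filter_agree_sum_eq ∅ (notMem_empty (Classical.arbitrary ι)) 0 r r'

/-- The fibre has `card G ^ (card ι - 1)` elements, so this is the paper's witness
`ℓ^{-(n-1)} δ[∑ᵢ aᵢ = c]`. -/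
noncomputable def sumWitness (c : G) (a : ι → G) : ℝ :=
  if ∑ i, a i = c then (#{a : ι → G | ∑ i, a i = c} : ℝ)⁻¹ else 0

lemma sumWitness_nonneg (c : G) (a : ι → G) : 0 ≤ sumWitness c a := by
  unfold sumWitness; positivity

lemma sum_ite_sumWitness (p : (ι → G) → Prop) [DecidablePred p] (c : G) :
    ∑ a, (if p a then sumWitness c a else 0) =
      #{a : ι → G | p a ∧ ∑ i, a i = c} / #{a : ι → G | ∑ i, a i = c} := by
  simp only [sumWitness, ← ite_and, ← sum_filter, sum_const, nsmul_eq_mul, div_eq_mul_inv]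

lemma sum_sumWitness [Nonempty ι] (c : G) : ∑ a : ι → G, sumWitness c a = 1 := by
  simpa [exists_sum_eq] using sum_ite_sumWitness (fun _ : ι → G => True) c

lemma sum_ite_sum_eq_sumWitness [Nonempty ι] (c r : G) :
    ∑ a : ι → G, (if ∑ i, a i = r then sumWitness c a else 0) = if r = c then 1 else 0 := by
  rw [sum_ite_sumWitness]
  split_ifs with h
  · subst h
    simp [exists_sum_eq]
  · rw [filter_eq_empty_iff.2 fun a _ ha => h (ha.1.symm.trans ha.2)]
    simp

lemma sum_ite_agree_sumWitness_eq (S : Finset ι) {j : ι} (hj : j ∉ S) (b : ι → G) (c c' : G) :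
    ∑ a : ι → G, (if ∀ i ∈ S, a i = b i then sumWitness c a else 0) =
      ∑ a : ι → G, (if ∀ i ∈ S, a i = b i then sumWitness c' a else 0) := by
  have : Nonempty ι := ⟨j⟩
  rw [sum_ite_sumWitness, sum_ite_sumWitness, card_filter_agree_sum_eq S hj b c c',
    card_filter_sum_eq c c']

end SumWitness

theorem stmt_3_general (n ℓ m : ℕ) (hn : 2 ≤ n) [NeZero ℓ]
    (f : (Fin n → Fin m) → Fin ℓ) :
    ∃ P : (Fin n → Fin m) → (Fin n → Fin ℓ) → ℝ,
      (∀ x, (∀ a, 0 ≤ P x a) ∧ ∑ a : Fin n → Fin ℓ, P x a = 1) ∧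
      (∀ S : Finset (Fin n), S ≠ Finset.univ →
        ∀ x x' : Fin n → Fin m, (∀ i ∈ S, x i = x' i) →
          ∀ b : Fin n → Fin ℓ,
            (∑ a : Fin n → Fin ℓ, if ∀ i ∈ S, a i = b i then P x a else 0)
              = (∑ a : Fin n → Fin ℓ, if ∀ i ∈ S, a i = b i then P x' a else 0)) ∧
      (∀ x r, (∑ a : Fin n → Fin ℓ, if ∑ i, a i = r then P x a else 0)
          = if r = f x then 1 else 0) := by
  have : Nonempty (Fin n) := ⟨⟨0, by omega⟩⟩
  refine ⟨fun x => sumWitness (f x), fun x => ⟨sumWitness_nonneg (f x), sum_sumWitness (f x)⟩,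
    fun S hS x x' _ b => ?_, fun x r => sum_ite_sum_eq_sumWitness (f x) r⟩
  obtain ⟨j, hj⟩ : ∃ j, j ∉ S := by simpa [eq_univ_iff_forall] using hS
  -- `convert` only reconciles two decidability instances of `∀ i ∈ S, a i = b i`
  convert sum_ite_agree_sumWitness_eq S hj b (f x) (f x')

/-- For every `n ≥ 2`, `ℓ ≥ 1`, `m ≥ 1` and every
`f : (Fin m)ⁿ → Fin ℓ`, there is a family of conditional distributions
`P(·|x)` on `(Fin ℓ)ⁿ` that (i) is normalized and nonnegative, (ii) is
non-signaling (marginals on a proper subset `S` of parties depend only on the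
inputs of parties in `S`), and (iii) has deterministic full-correlation
functions `∑_{a : ∑ᵢ aᵢ = r} P(a|x) = δ[r = f(x)]`. -/
theorem stmt_3 (n ℓ m : ℕ) (hn : 2 ≤ n) [NeZero ℓ] (hm : 1 ≤ m)
    (f : (Fin n → Fin m) → Fin ℓ) :
    ∃ P : (Fin n → Fin m) → (Fin n → Fin ℓ) → ℝ,
      (∀ x, (∀ a, 0 ≤ P x a) ∧ ∑ a : Fin n → Fin ℓ, P x a = 1) ∧
      (∀ S : Finset (Fin n), S ≠ Finset.univ →
        ∀ x x' : Fin n → Fin m, (∀ i ∈ S, x i = x' i) →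
          ∀ b : Fin n → Fin ℓ,
            (∑ a : Fin n → Fin ℓ, if ∀ i ∈ S, a i = b i then P x a else 0)
              = (∑ a : Fin n → Fin ℓ, if ∀ i ∈ S, a i = b i then P x' a else 0)) ∧
      (∀ x r, (∑ a : Fin n → Fin ℓ, if ∑ i, a i = r then P x a else 0)
          = if r = f x then 1 else 0) :=
  stmt_3_general n ℓ m hn f
end

section
/- Suppose every bipartite non-signaling correlation Q(a₁,a₂|x₁,x₂) (with two inputs and two outputs per party) satisfies the linear Bell inequality ∑_{a,x} β(a,x) Q(a|x) ≤ 0. Let P(a₁,a₂,o|x₁,x₂,s) be any tripartite non-signaling correlation, and fix a setting s₃ and outcome o₃ for the third party. Then the lifted inequality ∑_{a₁,a₂,x₁,x₂} β(a₁,a₂,x₁,x₂) P(a₁,a₂,o₃|x₁,x₂,s₃) ≤ 0 holds. -/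
/-!
Fixing the third party's setting `s₃` and outcome `o₃` leaves a nonnegative array
`R(a₁,a₂|x₁,x₂) = P(a₁,a₂,o₃|x₁,x₂,s₃)` that is still non-signaling between the first two
parties, so its total mass `p = P(o₃|s₃)` does not depend on `(x₁,x₂)`. If `p = 0` then `R`
vanishes; otherwise `R / p` is a bipartite non-signaling correlation, and the Bell expression,
being linear, takes at `R` the value `p` times its (nonpositive) value at `R / p`.
-/

open Finset

section NoSignaling

variable {X₁ X₂ A₁ A₂ : Type*} [Fintype A₁] [Fintype A₂]

structure IsNoSignaling (Q : X₁ → X₂ → A₁ → A₂ → ℝ) : Prop where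
  sum_left_eq : ∀ x₁ x₁' x₂ a₂, ∑ a₁, Q x₁ x₂ a₁ a₂ = ∑ a₁, Q x₁' x₂ a₁ a₂
  sum_right_eq : ∀ x₁ x₂ x₂' a₁, ∑ a₂, Q x₁ x₂ a₁ a₂ = ∑ a₂, Q x₁ x₂' a₁ a₂

namespace IsNoSignaling

variable {R : X₁ → X₂ → A₁ → A₂ → ℝ}

theorem div (hR : IsNoSignaling R) (c : ℝ) :
    IsNoSignaling fun x₁ x₂ a₁ a₂ => R x₁ x₂ a₁ a₂ / c where
  sum_left_eq x₁ x₁' x₂ a₂ := by simp only [← sum_div, hR.sum_left_eq x₁ x₁' x₂ a₂]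
  sum_right_eq x₁ x₂ x₂' a₁ := by simp only [← sum_div, hR.sum_right_eq x₁ x₂ x₂' a₁]

theorem total_eq (hR : IsNoSignaling R) (x₁ x₁' : X₁) (x₂ x₂' : X₂) :
    ∑ a₁, ∑ a₂, R x₁ x₂ a₁ a₂ = ∑ a₁, ∑ a₂, R x₁' x₂' a₁ a₂ :=
  calc ∑ a₁, ∑ a₂, R x₁ x₂ a₁ a₂
      = ∑ a₂, ∑ a₁, R x₁ x₂ a₁ a₂ := sum_comm
    _ = ∑ a₂, ∑ a₁, R x₁' x₂ a₁ a₂ := sum_congr rfl fun a₂ _ => hR.sum_left_eq x₁ x₁' x₂ a₂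
    _ = ∑ a₁, ∑ a₂, R x₁' x₂ a₁ a₂ := sum_comm
    _ = ∑ a₁, ∑ a₂, R x₁' x₂' a₁ a₂ := sum_congr rfl fun a₁ _ => hR.sum_right_eq x₁' x₂ x₂' a₁

end IsNoSignaling

theorem eq_zero_of_total_eq_zero {R : X₁ → X₂ → A₁ → A₂ → ℝ}
    (hR : ∀ x₁ x₂ a₁ a₂, 0 ≤ R x₁ x₂ a₁ a₂) {x₁ : X₁} {x₂ : X₂}
    (h : ∑ a₁, ∑ a₂, R x₁ x₂ a₁ a₂ = 0) (a₁ : A₁) (a₂ : A₂) : R x₁ x₂ a₁ a₂ = 0 := by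
  have hrow : ∑ a₂, R x₁ x₂ a₁ a₂ = 0 :=
    (sum_eq_zero_iff_of_nonneg fun a₁ _ => sum_nonneg fun a₂ _ => hR x₁ x₂ a₁ a₂).mp h a₁
      (mem_univ a₁)
  exact (sum_eq_zero_iff_of_nonneg fun a₂ _ => hR x₁ x₂ a₁ a₂).mp hrow a₂ (mem_univ a₂)

end NoSignaling

section BellValue

variable {X₁ X₂ A₁ A₂ : Type*} [Fintype X₁] [Fintype X₂] [Fintype A₁] [Fintype A₂]

def bellValue (β : A₁ → A₂ → X₁ → X₂ → ℝ) (Q : X₁ → X₂ → A₁ → A₂ → ℝ) : ℝ :=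
  ∑ x₁, ∑ x₂, ∑ a₁, ∑ a₂, β a₁ a₂ x₁ x₂ * Q x₁ x₂ a₁ a₂

theorem bellValue_div (β : A₁ → A₂ → X₁ → X₂ → ℝ) (Q : X₁ → X₂ → A₁ → A₂ → ℝ) (c : ℝ) :
    bellValue β (fun x₁ x₂ a₁ a₂ => Q x₁ x₂ a₁ a₂ / c) = bellValue β Q / c := by
  simp only [bellValue, ← mul_div_assoc, ← sum_div]

theorem bellValue_nonpos_of_isNoSignaling [Nonempty X₁] [Nonempty X₂]
    {β : A₁ → A₂ → X₁ → X₂ → ℝ}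
    (hBell : ∀ Q : X₁ → X₂ → A₁ → A₂ → ℝ, (∀ x₁ x₂ a₁ a₂, 0 ≤ Q x₁ x₂ a₁ a₂) →
      (∀ x₁ x₂, ∑ a₁, ∑ a₂, Q x₁ x₂ a₁ a₂ = 1) → IsNoSignaling Q → bellValue β Q ≤ 0)
    {R : X₁ → X₂ → A₁ → A₂ → ℝ} (hR₀ : ∀ x₁ x₂ a₁ a₂, 0 ≤ R x₁ x₂ a₁ a₂)
    (hR : IsNoSignaling R) : bellValue β R ≤ 0 := by
  obtain ⟨y₁⟩ := ‹Nonempty X₁›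
  obtain ⟨y₂⟩ := ‹Nonempty X₂›
  set p := ∑ a₁, ∑ a₂, R y₁ y₂ a₁ a₂
  have hp : 0 ≤ p := sum_nonneg fun a₁ _ => sum_nonneg fun a₂ _ => hR₀ y₁ y₂ a₁ a₂
  rcases hp.eq_or_lt with hp_zero | hp_pos
  · have hR_zero : R = 0 := by
      ext x₁ x₂ a₁ a₂
      exact eq_zero_of_total_eq_zero hR₀ ((hR.total_eq x₁ y₁ x₂ y₂).trans hp_zero.symm) a₁ a₂
    simp [bellValue, hR_zero]
  · have hQ := hBell (fun x₁ x₂ a₁ a₂ => R x₁ x₂ a₁ a₂ / p)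
      (fun x₁ x₂ a₁ a₂ => div_nonneg (hR₀ x₁ x₂ a₁ a₂) hp)
      (fun x₁ x₂ => by
        simp only [← sum_div, hR.total_eq x₁ y₁ x₂ y₂]
        exact div_self hp_pos.ne')
      (hR.div p)
    rwa [bellValue_div, div_le_iff₀ hp_pos, zero_mul] at hQ

end BellValue

theorem stmt_5_general {X₃ O₃ : Type*}
    (β : Fin 2 → Fin 2 → Fin 2 → Fin 2 → ℝ)
    (hBell : ∀ Q : Fin 2 → Fin 2 → Fin 2 → Fin 2 → ℝ,
      (∀ x₁ x₂ a₁ a₂, 0 ≤ Q x₁ x₂ a₁ a₂) →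
      (∀ x₁ x₂, ∑ a₁, ∑ a₂, Q x₁ x₂ a₁ a₂ = 1) →
      (∀ x₁ x₁' x₂ a₂, ∑ a₁, Q x₁ x₂ a₁ a₂ = ∑ a₁, Q x₁' x₂ a₁ a₂) →
      (∀ x₁ x₂ x₂' a₁, ∑ a₂, Q x₁ x₂ a₁ a₂ = ∑ a₂, Q x₁ x₂' a₁ a₂) →
      (∑ x₁, ∑ x₂, ∑ a₁, ∑ a₂, β a₁ a₂ x₁ x₂ * Q x₁ x₂ a₁ a₂) ≤ 0)
    (P : Fin 2 → Fin 2 → X₃ → Fin 2 → Fin 2 → O₃ → ℝ)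
    (hpos : ∀ x₁ x₂ x₃ a₁ a₂ a₃, 0 ≤ P x₁ x₂ x₃ a₁ a₂ a₃)
    (hns1 : ∀ x₁ x₁' x₂ x₃ a₂ a₃,
      ∑ a₁, P x₁ x₂ x₃ a₁ a₂ a₃ = ∑ a₁, P x₁' x₂ x₃ a₁ a₂ a₃)
    (hns2 : ∀ x₁ x₂ x₂' x₃ a₁ a₃,
      ∑ a₂, P x₁ x₂ x₃ a₁ a₂ a₃ = ∑ a₂, P x₁ x₂' x₃ a₁ a₂ a₃)
    (s₃ : X₃) (o₃ : O₃) :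
    (∑ x₁, ∑ x₂, ∑ a₁, ∑ a₂, β a₁ a₂ x₁ x₂ * P x₁ x₂ s₃ a₁ a₂ o₃) ≤ 0 :=
  bellValue_nonpos_of_isNoSignaling
    (fun Q hQ₀ hQ₁ hQ => hBell Q hQ₀ hQ₁ hQ.sum_left_eq hQ.sum_right_eq)
    (fun x₁ x₂ a₁ a₂ => hpos x₁ x₂ s₃ a₁ a₂ o₃)
    ⟨fun x₁ x₁' x₂ a₂ => hns1 x₁ x₁' x₂ s₃ a₂ o₃, fun x₁ x₂ x₂' a₁ => hns2 x₁ x₂ x₂' s₃ a₁ o₃⟩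

/-- If every bipartite non-signaling correlation (two binary
inputs/outputs per party) satisfies the linear Bell inequality
`∑ β(a,x) Q(a|x) ≤ 0`, then for any tripartite non-signaling correlation `P`
and any fixed setting `s₃` and outcome `o₃` of the third party, the lifted
inequality `∑ β(a₁,a₂,x₁,x₂) P(a₁,a₂,o₃|x₁,x₂,s₃) ≤ 0` holds. -/
theorem stmt_5 {X₃ O₃ : Type*} [Fintype O₃]
    (β : Fin 2 → Fin 2 → Fin 2 → Fin 2 → ℝ)
    (hBell : ∀ Q : Fin 2 → Fin 2 → Fin 2 → Fin 2 → ℝ,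
      (∀ x₁ x₂ a₁ a₂, 0 ≤ Q x₁ x₂ a₁ a₂) →
      (∀ x₁ x₂, ∑ a₁, ∑ a₂, Q x₁ x₂ a₁ a₂ = 1) →
      (∀ x₁ x₁' x₂ a₂, ∑ a₁, Q x₁ x₂ a₁ a₂ = ∑ a₁, Q x₁' x₂ a₁ a₂) →
      (∀ x₁ x₂ x₂' a₁, ∑ a₂, Q x₁ x₂ a₁ a₂ = ∑ a₂, Q x₁ x₂' a₁ a₂) →
      (∑ x₁, ∑ x₂, ∑ a₁, ∑ a₂, β a₁ a₂ x₁ x₂ * Q x₁ x₂ a₁ a₂) ≤ 0)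
    (P : Fin 2 → Fin 2 → X₃ → Fin 2 → Fin 2 → O₃ → ℝ)
    (hpos : ∀ x₁ x₂ x₃ a₁ a₂ a₃, 0 ≤ P x₁ x₂ x₃ a₁ a₂ a₃)
    (hnorm : ∀ x₁ x₂ x₃, ∑ a₁, ∑ a₂, ∑ a₃, P x₁ x₂ x₃ a₁ a₂ a₃ = 1)
    (hns1 : ∀ x₁ x₁' x₂ x₃ a₂ a₃,
      ∑ a₁, P x₁ x₂ x₃ a₁ a₂ a₃ = ∑ a₁, P x₁' x₂ x₃ a₁ a₂ a₃)
    (hns2 : ∀ x₁ x₂ x₂' x₃ a₁ a₃,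
      ∑ a₂, P x₁ x₂ x₃ a₁ a₂ a₃ = ∑ a₂, P x₁ x₂' x₃ a₁ a₂ a₃)
    (hns3 : ∀ x₁ x₂ x₃ x₃' a₁ a₂,
      ∑ a₃, P x₁ x₂ x₃ a₁ a₂ a₃ = ∑ a₃, P x₁ x₂ x₃' a₁ a₂ a₃)
    (s₃ : X₃) (o₃ : O₃) :
    (∑ x₁, ∑ x₂, ∑ a₁, ∑ a₂, β a₁ a₂ x₁ x₂ * P x₁ x₂ s₃ a₁ a₂ o₃) ≤ 0 :=
  stmt_5_general β hBell P hpos hns1 hns2 s₃ o₃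
end
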